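/- arXiv:0809.4964 — 2 statements merged into one kernel-verified Lean document; each statement's English description precedes it below -/
import Mathlib

section
/- Let S_D(X) be the set of doubly stable filters on a quasi-uniform space (X, 𝒰). For U ∈ 𝒰 define U_+ = {(ℱ,𝒢) : ⋂_{F∈ℱ}U(F) ∈ 𝒢} and U_- = {(ℱ,𝒢) : ⋂_{G∈𝒢}U⁻¹(G) ∈ ℱ}, and U_D = U_+ ∩ U_-. Then {U_D : U ∈ 𝒰} is a base for a quasi-uniformity on S_D(X); in particular each U_D contains the diagonal, and if V² ⊆ U then V_D ∘ V_D ⊆ U_D. -/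
open Filter Set

variable {X Y : Type*}

/-- Image of a set under a relation: `U(A) = {y : ∃ x ∈ A, (x,y) ∈ U}`. -/
def relImg (U : Set (X × X)) (A : Set X) : Set X := {y | ∃ x ∈ A, (x, y) ∈ U}

/-- Inverse image: `U⁻¹(A) = {y : ∃ x ∈ A, (y,x) ∈ U}`. -/
def relPre (U : Set (X × X)) (A : Set X) : Set X := {y | ∃ x ∈ A, (y, x) ∈ U}

/-- A quasi-uniformity: a filter of reflexive relations, each containing
a relational square of a member. -/
structure IsQuasiUniformity (𝒰 : Filter (X × X)) : Prop where
  refl : ∀ U ∈ 𝒰, SetRel.id ⊆ U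
  comp : ∀ U ∈ 𝒰, ∃ V ∈ 𝒰, SetRel.comp V V ⊆ U

/-- A filter is stable if `⋂_{F ∈ ℱ} U(F) ∈ ℱ` for all `U ∈ 𝒰`. -/
def IsStable (𝒰 : Filter (X × X)) (ℱ : Filter X) : Prop :=
  ∀ U ∈ 𝒰, (⋂ F ∈ ℱ.sets, relImg U F) ∈ ℱ

/-- `U_ℱ = ⋂_{F ∈ ℱ} (U⁻¹(F) ∩ U(F))`. -/
def bigU (U : Set (X × X)) (ℱ : Filter X) : Set X :=
  ⋂ F ∈ ℱ.sets, (relPre U F ∩ relImg U F)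

/-- A filter is doubly stable if `U_ℱ ∈ ℱ` for all `U ∈ 𝒰`. -/
def IsDoublyStable (𝒰 : Filter (X × X)) (ℱ : Filter X) : Prop :=
  ∀ U ∈ 𝒰, bigU U ℱ ∈ ℱ

/-- The 2-envelope of a filter. -/
def envelope (𝒰 : Filter (X × X)) (ℱ : Filter X) : Filter X :=
  Filter.generate {S | ∃ U ∈ 𝒰, ∃ F ∈ ℱ, S = relPre U F ∩ relImg U F}

/-- The filter `ℱ_𝒰` generated by `{U_ℱ : U ∈ 𝒰}`. -/
def filterU (𝒰 : Filter (X × X)) (ℱ : Filter X) : Filter X :=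
  Filter.generate {S | ∃ U ∈ 𝒰, S = bigU U ℱ}

/-- `τ(𝒰)`-cluster points of a filter. -/
def fwdCluster (𝒰 : Filter (X × X)) (ℱ : Filter X) : Set X :=
  {x | ∀ F ∈ ℱ, ∀ U ∈ 𝒰, ∃ y ∈ F, (x, y) ∈ U}

/-- `τ(𝒰⁻¹)`-cluster points of a filter. -/
def bwdCluster (𝒰 : Filter (X × X)) (ℱ : Filter X) : Set X :=
  {x | ∀ F ∈ ℱ, ∀ U ∈ 𝒰, ∃ y ∈ F, (y, x) ∈ U}

/-- The set of double cluster points of a filter. -/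
def doubleCluster (𝒰 : Filter (X × X)) (ℱ : Filter X) : Set X :=
  fwdCluster 𝒰 ℱ ∩ bwdCluster 𝒰 ℱ

/-- The basic entourage `U_D = U_+ ∩ U_-` of the stability quasi-uniformity. -/
def UD (U : Set (X × X)) : Set (Filter X × Filter X) :=
  {p | (⋂ F ∈ p.1.sets, relImg U F) ∈ p.2 ∧ (⋂ G ∈ p.2.sets, relPre U G) ∈ p.1}

section Relations

variable {U V W : Set (X × X)}

theorem relImg_mono (hUV : U ⊆ V) (A : Set X) : relImg U A ⊆ relImg V A :=
  fun _ ⟨x, hx, hxy⟩ => ⟨x, hx, hUV hxy⟩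

theorem relPre_mono (hUV : U ⊆ V) (A : Set X) : relPre U A ⊆ relPre V A :=
  fun _ ⟨x, hx, hyx⟩ => ⟨x, hx, hUV hyx⟩

theorem relImg_relImg_subset (A : Set X) :
    relImg W (relImg V A) ⊆ relImg (SetRel.comp V W) A :=
  fun _ ⟨y, ⟨x, hx, hxy⟩, hyz⟩ => ⟨x, hx, y, hxy, hyz⟩

theorem relPre_relPre_subset (A : Set X) :
    relPre V (relPre W A) ⊆ relPre (SetRel.comp V W) A :=
  fun _ ⟨y, ⟨z, hz, hyz⟩, hxy⟩ => ⟨z, hz, y, hxy, hyz⟩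

end Relations

section UD

variable {U V W : Set (X × X)} {ℱ 𝒢 ℋ : Filter X}

theorem relImg_mem_of_iInter_mem (h : (⋂ F ∈ ℱ.sets, relImg U F) ∈ 𝒢) {F : Set X}
    (hF : F ∈ ℱ) : relImg U F ∈ 𝒢 :=
  mem_of_superset h (biInter_subset_of_mem hF)

theorem relPre_mem_of_iInter_mem (h : (⋂ G ∈ 𝒢.sets, relPre U G) ∈ ℱ) {G : Set X}
    (hG : G ∈ 𝒢) : relPre U G ∈ ℱ :=
  mem_of_superset h (biInter_subset_of_mem hG)

theorem UD_mono (hUV : U ⊆ V) : (UD U : Set (Filter X × Filter X)) ⊆ UD V :=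
  fun _ ⟨hImg, hPre⟩ =>
    ⟨mem_of_superset hImg (biInter_mono subset_rfl fun F _ => relImg_mono hUV F),
      mem_of_superset hPre (biInter_mono subset_rfl fun G _ => relPre_mono hUV G)⟩

theorem mem_UD_self_of_bigU_mem (h : bigU U ℱ ∈ ℱ) : (ℱ, ℱ) ∈ UD U :=
  ⟨mem_of_superset h (biInter_mono subset_rfl fun _ _ => inter_subset_right),
    mem_of_superset h (biInter_mono subset_rfl fun _ _ => inter_subset_left)⟩

theorem mem_UD_comp (hℱ𝒢 : (ℱ, 𝒢) ∈ UD V) (h𝒢ℋ : (𝒢, ℋ) ∈ UD W) :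
    (ℱ, ℋ) ∈ UD (SetRel.comp V W) := by
  obtain ⟨hVImg, hVPre⟩ := hℱ𝒢
  obtain ⟨hWImg, hWPre⟩ := h𝒢ℋ
  refine ⟨mem_of_superset hWImg ?_, mem_of_superset hVPre ?_⟩
  · refine subset_iInter₂ fun F hF => ?_
    calc (⋂ G ∈ 𝒢.sets, relImg W G) ⊆ relImg W (relImg V F) :=
          biInter_subset_of_mem (relImg_mem_of_iInter_mem hVImg hF)
      _ ⊆ relImg (SetRel.comp V W) F := relImg_relImg_subset F
  · refine subset_iInter₂ fun H hH => ?_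
    calc (⋂ G ∈ 𝒢.sets, relPre V G) ⊆ relPre V (relPre W H) :=
          biInter_subset_of_mem (relPre_mem_of_iInter_mem hWPre hH)
      _ ⊆ relPre (SetRel.comp V W) H := relPre_relPre_subset H

end UD

theorem stmt11_general (𝒰 : Filter (X × X)) :
    (∀ U ∈ 𝒰, ∀ ℱ : Filter X, IsDoublyStable 𝒰 ℱ → (ℱ, ℱ) ∈ UD U) ∧
    (∀ U V : Set (X × X), SetRel.comp V V ⊆ U →
      ∀ ℱ 𝒢 ℋ : Filter X, IsDoublyStable 𝒰 ℱ → IsDoublyStable 𝒰 𝒢 →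
        IsDoublyStable 𝒰 ℋ → (ℱ, 𝒢) ∈ UD V → (𝒢, ℋ) ∈ UD V → (ℱ, ℋ) ∈ UD U) ∧
    (∀ U V : Set (X × X), U ⊆ V → (UD U : Set (Filter X × Filter X)) ⊆ UD V) :=
  ⟨fun U hU _ hℱ => mem_UD_self_of_bigU_mem (hℱ U hU),
    fun _ _ hVV _ _ _ _ _ _ hℱ𝒢 h𝒢ℋ => UD_mono hVV (mem_UD_comp hℱ𝒢 h𝒢ℋ),
    fun _ _ hUV => UD_mono hUV⟩

theorem stmt11 (𝒰 : Filter (X × X)) (h𝒰 : IsQuasiUniformity 𝒰) :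
    (∀ U ∈ 𝒰, ∀ ℱ : Filter X, IsDoublyStable 𝒰 ℱ → (ℱ, ℱ) ∈ UD U) ∧
    (∀ U V : Set (X × X), SetRel.comp V V ⊆ U →
      ∀ ℱ 𝒢 ℋ : Filter X, IsDoublyStable 𝒰 ℱ → IsDoublyStable 𝒰 𝒢 →
        IsDoublyStable 𝒰 ℋ → (ℱ, 𝒢) ∈ UD V → (𝒢, ℋ) ∈ UD V → (ℱ, ℋ) ∈ UD U) ∧
    (∀ U V : Set (X × X), U ⊆ V → (UD U : Set (Filter X × Filter X)) ⊆ UD V) :=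
  stmt11_general 𝒰
end

section
/- Let (X, 𝒰) be a quasi-uniform space. If ℱ is a doubly stable filter on (X, 𝒰), then the net (𝒞_F)_{F ∈ (ℱ, ⊇)} of principal filters, indexed by the members of ℱ directed by reverse inclusion, is a (𝒰_D)^s-Cauchy net in (S_D(X), 𝒰_D) and converges to ℱ in the topology τ((𝒰_D)^s). Consequently the set of principal filters {𝒞_C : C ∈ 𝒫₀(X)} is τ((𝒰_D)^s)-dense in S_D(X). -/
/-!
Double stability puts `U_ℱ = ⋂_{F ∈ ℱ} (U⁻¹(F) ∩ U(F))` into `ℱ` for every `U ∈ 𝒰`. Any two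
members `A, B` of `ℱ` inside `U_ℱ` satisfy `B ⊆ U(A)` and `A ⊆ U⁻¹(B)`, which is exactly
`(𝒞_A, 𝒞_B) ∈ U_D`; and since `U` is reflexive, each such member `F` is `U_D`-close to `ℱ` in
both directions. So past the index `U_ℱ` the net `(𝒞_F)_F` is `U_D ∩ U_D⁻¹`-Cauchy and
`U_D ∩ U_D⁻¹`-close to `ℱ`; in particular `𝒞_{U_ℱ}`, nonempty as `ℱ` is proper, is a principal
filter in the `(𝒰_D)^s`-neighbourhood of `ℱ` determined by `U`.
-/

open Filter Set

variable {X Y : Type*}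

variable {U : Set (X × X)} {A B F G : Set X} {ℱ : Filter X}

lemma relImg_mono_s17 (h : A ⊆ B) : relImg U A ⊆ relImg U B :=
  fun _ ⟨x, hx, hxy⟩ => ⟨x, h hx, hxy⟩

lemma relPre_mono_s17 (h : A ⊆ B) : relPre U A ⊆ relPre U B :=
  fun _ ⟨x, hx, hxy⟩ => ⟨x, h hx, hxy⟩

lemma subset_relImg_of_id_subset (hU : SetRel.id ⊆ U) (A : Set X) : A ⊆ relImg U A :=
  fun x hx => ⟨x, hx, hU rfl⟩

lemma subset_relPre_of_id_subset (hU : SetRel.id ⊆ U) (A : Set X) : A ⊆ relPre U A :=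
  fun x hx => ⟨x, hx, hU rfl⟩

lemma biInter_principal_relImg (U : Set (X × X)) (F : Set X) :
    ⋂ G ∈ (𝓟 F).sets, relImg U G = relImg U F :=
  (biInter_subset_of_mem (mem_principal_self F)).antisymm
    fun _ hx => mem_iInter₂.mpr fun _ hG => relImg_mono_s17 (mem_principal.mp hG) hx

lemma biInter_principal_relPre (U : Set (X × X)) (F : Set X) :
    ⋂ G ∈ (𝓟 F).sets, relPre U G = relPre U F :=
  (biInter_subset_of_mem (mem_principal_self F)).antisymm
    fun _ hx => mem_iInter₂.mpr fun _ hG => relPre_mono_s17 (mem_principal.mp hG) hx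

lemma principal_mem_UD_principal_iff :
    (𝓟 A, 𝓟 B) ∈ UD U ↔ B ⊆ relImg U A ∧ A ⊆ relPre U B := by
  simp only [UD, mem_ofPred_eq, biInter_principal_relImg, biInter_principal_relPre,
    mem_principal]

lemma bigU_subset_relImg (hG : G ∈ ℱ) : bigU U ℱ ⊆ relImg U G :=
  fun _ hx => (mem_iInter₂.mp hx G hG).2

lemma bigU_subset_relPre (hG : G ∈ ℱ) : bigU U ℱ ⊆ relPre U G :=
  fun _ hx => (mem_iInter₂.mp hx G hG).1

lemma principal_mem_UD_principal_of_subset_bigU (hA : A ∈ ℱ) (hB : B ∈ ℱ)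
    (hAU : A ⊆ bigU U ℱ) (hBU : B ⊆ bigU U ℱ) : (𝓟 A, 𝓟 B) ∈ UD U :=
  principal_mem_UD_principal_iff.mpr
    ⟨hBU.trans (bigU_subset_relImg hA), hAU.trans (bigU_subset_relPre hB)⟩

lemma mem_UD_principal_of_subset_bigU (hU : SetRel.id ⊆ U) (hF : F ∈ ℱ)
    (hFU : F ⊆ bigU U ℱ) : (ℱ, 𝓟 F) ∈ UD U := by
  refine ⟨mem_principal.mpr fun x hx => mem_iInter₂.mpr fun G hG => ?_, ?_⟩
  · exact bigU_subset_relImg hG (hFU hx)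
  · rw [biInter_principal_relPre]
    exact mem_of_superset hF (subset_relPre_of_id_subset hU F)

lemma principal_mem_UD_of_subset_bigU (hU : SetRel.id ⊆ U) (hF : F ∈ ℱ)
    (hFU : F ⊆ bigU U ℱ) : (𝓟 F, ℱ) ∈ UD U := by
  refine ⟨?_, mem_principal.mpr fun x hx => mem_iInter₂.mpr fun G hG => ?_⟩
  · rw [biInter_principal_relImg]
    exact mem_of_superset hF (subset_relImg_of_id_subset hU F)
  · exact bigU_subset_relPre hG (hFU hx)

theorem stmt17 (𝒰 : Filter (X × X)) (h𝒰 : IsQuasiUniformity 𝒰)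
    (ℱ : Filter X) (hne : ℱ.NeBot) (hds : IsDoublyStable 𝒰 ℱ) :
    (∀ U ∈ 𝒰, ∃ F₀ ∈ ℱ, ∀ F₁ ∈ ℱ.sets, ∀ F₂ ∈ ℱ.sets, F₁ ⊆ F₀ → F₂ ⊆ F₀ →
      (Filter.principal F₁, Filter.principal F₂) ∈ UD U ∧
      (Filter.principal F₂, Filter.principal F₁) ∈ UD U) ∧
    (∀ U ∈ 𝒰, ∃ F₀ ∈ ℱ, ∀ F ∈ ℱ.sets, F ⊆ F₀ →
      (ℱ, Filter.principal F) ∈ UD U ∧ (Filter.principal F, ℱ) ∈ UD U) ∧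
    (∀ U ∈ 𝒰, ∃ C : Set X, C.Nonempty ∧
      (ℱ, Filter.principal C) ∈ UD U ∧ (Filter.principal C, ℱ) ∈ UD U) := by
  have converges : ∀ U ∈ 𝒰, ∀ F ∈ ℱ, F ⊆ bigU U ℱ →
      (ℱ, 𝓟 F) ∈ UD U ∧ (𝓟 F, ℱ) ∈ UD U := fun U hU F hF hFU =>
    ⟨mem_UD_principal_of_subset_bigU (h𝒰.refl U hU) hF hFU,
      principal_mem_UD_of_subset_bigU (h𝒰.refl U hU) hF hFU⟩
  refine ⟨fun U hU => ⟨bigU U ℱ, hds U hU, fun F₁ hF₁ F₂ hF₂ h₁ h₂ => ?_⟩,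
    fun U hU => ⟨bigU U ℱ, hds U hU, converges U hU⟩,
    fun U hU => ⟨bigU U ℱ, nonempty_of_mem (hds U hU),
      converges U hU _ (hds U hU) subset_rfl⟩⟩
  exact ⟨principal_mem_UD_principal_of_subset_bigU hF₁ hF₂ h₁ h₂,
    principal_mem_UD_principal_of_subset_bigU hF₂ hF₁ h₂ h₁⟩
end
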